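/- Suppose constants r₁, r₂ ∈ (0,1) and ω ∈ ℝ satisfy ω·r₁ = α·Ω₀·r₁ - γ·Φ·(r₁+r₂) and ω·r₂ = -β·Ω₀·r₂ + γ·Φ·(r₁+r₂), where α = 1/(1-r₁²), β = 1/(1-r₂²), γ = 1/(2(r₁+r₂)²). Then z₁(t) = r₁e^{iωt}, z₂(t) = -r₂e^{iωt} is an exact solution of the vortex dipole equations. -/

import Mathlib

/-! Both vortices sit on one diameter and rotate rigidly with angular velocity `ω`, so
`i ż = -ω z` for each of them, while `|z₁| = r₁`, `|z₂| = r₂` and `|z₁ - z₂| = r₁ + r₂` stay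
constant. The right-hand sides of the dipole equations are then real multiples of `e^{iωt}`, and
matching the coefficients is exactly the pair of algebraic equations for `r₁`, `r₂`, `ω`. -/

open Complex

theorem hasDerivAt_mul_exp_I_mul (c : ℂ) (ω t : ℝ) :
    HasDerivAt (fun t : ℝ => c * exp (I * ω * t)) (c * (I * ω * exp (I * ω * t))) t := by
  have hphase : HasDerivAt (fun t : ℝ => I * ω * (t : ℂ)) (I * ω * 1) t :=
    (ofRealCLM.hasDerivAt (x := t)).const_mul (I * ω)
  simpa [mul_comm] using (hphase.cexp).const_mul c

theorem I_mul_deriv_mul_exp_I_mul (c : ℂ) (ω t : ℝ) :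
    ∃ w : ℂ, HasDerivAt (fun t : ℝ => c * exp (I * ω * t)) w t ∧
      I * w = -(ω * c) * exp (I * ω * t) := by
  refine ⟨_, hasDerivAt_mul_exp_I_mul c ω t, ?_⟩
  linear_combination (ω * c * exp (I * ω * t)) * I_mul_I

theorem norm_exp_I_mul_ofReal_mul (ω t : ℝ) : ‖exp (I * ω * t)‖ = 1 := by
  rw [show I * ω * t = ((ω * t : ℝ) : ℂ) * I by push_cast; ring]
  exact norm_exp_ofReal_mul_I _

theorem norm_ofReal_mul_exp_I_mul_sq (c ω t : ℝ) : ‖(c : ℂ) * exp (I * ω * t)‖ ^ 2 = c ^ 2 := by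
  rw [norm_mul, norm_exp_I_mul_ofReal_mul, mul_one, norm_real, Real.norm_eq_abs, sq_abs]

theorem guiding_center_exact_solution
    (Ω₀ Φ : ℝ)
    (r₁ r₂ ω : ℝ)
    (heq1 : ω * r₁ = (1 / (1 - r₁ ^ 2)) * Ω₀ * r₁
      - (1 / (2 * (r₁ + r₂) ^ 2)) * Φ * (r₁ + r₂))
    (heq2 : ω * r₂ = -(1 / (1 - r₂ ^ 2)) * Ω₀ * r₂
      + (1 / (2 * (r₁ + r₂) ^ 2)) * Φ * (r₁ + r₂))
    (z₁ z₂ : ℝ → ℂ)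
    (hz₁ : z₁ = fun t : ℝ => (r₁ : ℂ) * Complex.exp (Complex.I * (ω : ℂ) * (t : ℂ)))
    (hz₂ : z₂ = fun t : ℝ => -(r₂ : ℂ) * Complex.exp (Complex.I * (ω : ℂ) * (t : ℂ))) :
    (∀ t : ℝ, ∃ w : ℂ, HasDerivAt z₁ w t ∧
      Complex.I * w
        = -((Ω₀ / (1 - ‖z₁ t‖ ^ 2) : ℝ) : ℂ) * z₁ t
          + ((Φ / (2 * ‖z₁ t - z₂ t‖ ^ 2) : ℝ) : ℂ) * (z₁ t - z₂ t)) ∧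
    (∀ t : ℝ, ∃ w : ℂ, HasDerivAt z₂ w t ∧
      Complex.I * w
        = ((Ω₀ / (1 - ‖z₂ t‖ ^ 2) : ℝ) : ℂ) * z₂ t
          - ((Φ / (2 * ‖z₁ t - z₂ t‖ ^ 2) : ℝ) : ℂ) * (z₂ t - z₁ t)) := by
  subst hz₁ hz₂
  have hgap (t : ℝ) : ‖(r₁ : ℂ) * exp (I * ω * t) - -(r₂ : ℂ) * exp (I * ω * t)‖ ^ 2
      = (r₁ + r₂) ^ 2 := by
    rw [← norm_ofReal_mul_exp_I_mul_sq (r₁ + r₂) ω t]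
    congr 2
    push_cast
    ring
  have hnorm₂ (t : ℝ) : ‖-(r₂ : ℂ) * exp (I * ω * t)‖ ^ 2 = r₂ ^ 2 := by
    rw [neg_mul, norm_neg, norm_ofReal_mul_exp_I_mul_sq]
  have heq1' := congrArg (fun x : ℝ => (x : ℂ)) heq1
  have heq2' := congrArg (fun x : ℝ => (x : ℂ)) heq2
  push_cast at heq1' heq2'
  refine ⟨fun t => ?_, fun t => ?_⟩
  · obtain ⟨w, hw, hIw⟩ := I_mul_deriv_mul_exp_I_mul r₁ ω t
    refine ⟨w, hw, ?_⟩
    rw [hIw, norm_ofReal_mul_exp_I_mul_sq, hgap]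
    push_cast
    linear_combination (-exp (I * ω * t)) * heq1'
  · obtain ⟨w, hw, hIw⟩ := I_mul_deriv_mul_exp_I_mul (-r₂) ω t
    refine ⟨w, hw, ?_⟩
    rw [hIw, hnorm₂, hgap]
    push_cast
    linear_combination exp (I * ω * t) * heq2'
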